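/- Subtyping of annotated types implies semantic inclusion: if τ̂₁ ⊑ τ̂₂ (i.e., τ̂₂ = τ̂₁ ⊔ τ̂₂) then A[τ̂₁] ⊆ A[τ̂₂] and ‖τ̂₁‖ ⊆ ‖τ̂₂‖. -/

import Mathlib

abbrev Color := ℕ

mutual
inductive RVal : Type where
  | int : ℤ → RVal
  | bool : Bool → RVal
  | pair : AVal → AVal → RVal
  | coll : List AVal → RVal
inductive AVal : Type where
  | ann : RVal → Set Color → AVal
end

inductive Val : Type where
  | int : ℤ → Val
  | bool : Bool → Val
  | pair : Val → Val → Val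
  | coll : List Val → Val

mutual
def eraseA : AVal → Val
  | .ann w _ => eraseR w
def eraseR : RVal → Val
  | .int i => .int i
  | .bool b => .bool b
  | .pair v₁ v₂ => .pair (eraseA v₁) (eraseA v₂)
  | .coll vs => .coll (eraseList vs)
def eraseList : List AVal → List Val
  | [] => []
  | v :: vs => eraseA v :: eraseList vs
end

mutual
def colorsA : AVal → Set Color
  | .ann w Φ => Φ ∪ colorsR w
def colorsR : RVal → Set Color
  | .int _ => ∅
  | .bool _ => ∅
  | .pair v₁ v₂ => colorsA v₁ ∪ colorsA v₂
  | .coll vs => colorsList vs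
def colorsList : List AVal → Set Color
  | [] => ∅
  | v :: vs => colorsA v ∪ colorsList vs
end

def substSet (α : Color → Set Color) (Φ : Set Color) : Set Color := ⋃ c ∈ Φ, α c

mutual
def substA (α : Color → Set Color) : AVal → AVal
  | .ann w Φ => .ann (substR α w) (substSet α Φ)
def substR (α : Color → Set Color) : RVal → RVal
  | .int i => .int i
  | .bool b => .bool b
  | .pair v₁ v₂ => .pair (substA α v₁) (substA α v₂)
  | .coll vs => .coll (substList α vs)
def substList (α : Color → Set Color) : List AVal → List AVal
  | [] => []
  | v :: vs => substA α v :: substList α vs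
end

-- Distinctly-colored: every annotation a singleton, no color used twice.
mutual
def DistA : AVal → Prop
  | .ann w Φ => (∃ c, Φ = {c}) ∧ Φ ∩ colorsR w = ∅ ∧ DistR w
def DistR : RVal → Prop
  | .int _ => True
  | .bool _ => True
  | .pair v₁ v₂ => DistA v₁ ∧ DistA v₂ ∧ colorsA v₁ ∩ colorsA v₂ = ∅
  | .coll vs => DistList vs
def DistList : List AVal → Prop
  | [] => True
  | v :: vs => DistA v ∧ DistList vs ∧ colorsA v ∩ colorsList vs = ∅
end

-- "Equal except at c"
mutual
inductive EqExA (c : Color) : AVal → AVal → Prop where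
  | same : ∀ {w₁ w₂ : RVal} {Φ : Set Color}, EqExR c w₁ w₂ → EqExA c (.ann w₁ Φ) (.ann w₂ Φ)
  | escape : ∀ {w₁ w₂ : RVal} {Φ₁ Φ₂ : Set Color}, c ∈ Φ₁ → c ∈ Φ₂ → EqExA c (.ann w₁ Φ₁) (.ann w₂ Φ₂)
inductive EqExR (c : Color) : RVal → RVal → Prop where
  | int : ∀ i : ℤ, EqExR c (.int i) (.int i)
  | bool : ∀ b : Bool, EqExR c (.bool b) (.bool b)
  | pair : ∀ {v₁ v₂ v₁' v₂' : AVal}, EqExA c v₁ v₁' → EqExA c v₂ v₂' → EqExR c (.pair v₁ v₂) (.pair v₁' v₂')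
  | coll : ∀ {vs vs' : List AVal}, EqExL c vs vs' → EqExR c (.coll vs) (.coll vs')
inductive EqExL (c : Color) : List AVal → List AVal → Prop where
  | nil : EqExL c [] []
  | cons : ∀ {v v' : AVal} {vs vs' : List AVal}, EqExA c v v' → EqExL c vs vs' → EqExL c (v :: vs) (v' :: vs')
end

inductive Ty : Type where
  | int : Ty
  | bool : Ty
  | pair : Ty → Ty → Ty
  | coll : Ty → Ty

inductive HasTy : Val → Ty → Prop where
  | int : ∀ i : ℤ, HasTy (.int i) .int
  | bool : ∀ b : Bool, HasTy (.bool b) .bool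
  | pair : ∀ {v₁ v₂ t₁ t₂}, HasTy v₁ t₁ → HasTy v₂ t₂ → HasTy (.pair v₁ v₂) (.pair t₁ t₂)
  | coll : ∀ {vs t}, (∀ v ∈ vs, HasTy v t) → HasTy (.coll vs) (.coll t)

/-- v is an annotated value of (ordinary) type τ. -/
def ATyped (v : AVal) (t : Ty) : Prop := HasTy (eraseA v) t

/-- Add an annotation set to the top-level annotation. -/
def addTop (v : AVal) (Φ : Set Color) : AVal :=
  match v with
  | .ann w Ψ => .ann w (Ψ ∪ Φ)

/- Annotated types -/
mutual
inductive ATy : Type where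
  | ann : RTy → Set Color → ATy
inductive RTy : Type where
  | int : RTy
  | bool : RTy
  | pair : ATy → ATy → RTy
  | coll : ATy → RTy
end

mutual
def teraseA : ATy → Ty
  | .ann w _ => teraseR w
def teraseR : RTy → Ty
  | .int => .int
  | .bool => .bool
  | .pair t₁ t₂ => .pair (teraseA t₁) (teraseA t₂)
  | .coll t => .coll (teraseA t)
end

mutual
def tcolorsA : ATy → Set Color
  | .ann w Φ => Φ ∪ tcolorsR w
def tcolorsR : RTy → Set Color
  | .int => ∅
  | .bool => ∅
  | .pair t₁ t₂ => tcolorsA t₁ ∪ tcolorsA t₂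
  | .coll t => tcolorsA t
end

mutual
def mergeA : ATy → ATy → ATy
  | .ann w₁ Φ₁, .ann w₂ Φ₂ => .ann (mergeR w₁ w₂) (Φ₁ ∪ Φ₂)
def mergeR : RTy → RTy → RTy
  | .int, .int => .int
  | .bool, .bool => .bool
  | .pair a b, .pair a' b' => .pair (mergeA a a') (mergeA b b')
  | .coll a, .coll a' => .coll (mergeA a a')
  | w, _ => w
end

-- Semantics of annotated types: v ∈ A[τ̂].
mutual
def memA : AVal → ATy → Prop
  | .ann w Ψ, .ann ω Φ => Ψ ⊆ Φ ∧ memR w ω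
def memR : RVal → RTy → Prop
  | .int _, .int => True
  | .bool _, .bool => True
  | .pair v₁ v₂, .pair t₁ t₂ => memA v₁ t₁ ∧ memA v₂ t₂
  | .coll vs, .coll t => memList vs t
  | _, _ => False
def memList : List AVal → ATy → Prop
  | [], _ => True
  | v :: vs, t => memA v t ∧ memList vs t
end

/-! The equation `τ̂₂ = τ̂₁ ⊔ τ̂₂` forces `τ̂₂` to have the shape of `τ̂₁`, with the root annotation
of `τ̂₁` contained in that of `τ̂₂` and the same equation holding between corresponding components.
Both inclusions then follow by simultaneous structural induction on `τ̂₁`. -/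

theorem mergeR_int_left (ω : RTy) : mergeR .int ω = .int := by
  cases ω <;> rfl

theorem mergeR_bool_left (ω : RTy) : mergeR .bool ω = .bool := by
  cases ω <;> rfl

theorem exists_eq_pair_of_mergeR_pair_eq {a b : ATy} {ω : RTy} (h : mergeR (.pair a b) ω = ω) :
    ∃ a' b', ω = .pair a' b' ∧ mergeA a a' = a' ∧ mergeA b b' = b' := by
  cases ω with
  | pair a' b' => exact ⟨a', b', rfl, RTy.pair.inj h⟩
  | _ => cases h

theorem exists_eq_coll_of_mergeR_coll_eq {a : ATy} {ω : RTy} (h : mergeR (.coll a) ω = ω) :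
    ∃ a', ω = .coll a' ∧ mergeA a a' = a' := by
  cases ω with
  | coll a' => exact ⟨a', rfl, RTy.coll.inj h⟩
  | _ => cases h

theorem memList_mono {t₁ t₂ : ATy} (h : ∀ v, memA v t₁ → memA v t₂) :
    ∀ {vs : List AVal}, memList vs t₁ → memList vs t₂
  | [], _ => trivial
  | _ :: _, ⟨hv, hvs⟩ => ⟨h _ hv, memList_mono h hvs⟩

mutual
theorem memA_of_mergeA_eq : ∀ {t₁ t₂ : ATy}, mergeA t₁ t₂ = t₂ → ∀ {v : AVal}, memA v t₁ → memA v t₂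
  | .ann _ _, .ann _ _, h, .ann _ _, ⟨hΨ, hw⟩ => by
    obtain ⟨hω, hΦ⟩ := ATy.ann.inj h
    exact ⟨hΨ.trans (Set.union_eq_right.mp hΦ), memR_of_mergeR_eq hω hw⟩

theorem memR_of_mergeR_eq : ∀ {ω₁ ω₂ : RTy}, mergeR ω₁ ω₂ = ω₂ → ∀ {w : RVal}, memR w ω₁ → memR w ω₂
  | .int, ω₂, h, _, hw => by
    rw [mergeR_int_left] at h
    exact h ▸ hw
  | .bool, ω₂, h, _, hw => by
    rw [mergeR_bool_left] at h
    exact h ▸ hw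
  | .pair _ _, _, h, .pair _ _, ⟨h₁, h₂⟩ => by
    obtain ⟨_, _, rfl, ha, hb⟩ := exists_eq_pair_of_mergeR_pair_eq h
    exact ⟨memA_of_mergeA_eq ha h₁, memA_of_mergeA_eq hb h₂⟩
  | .coll _, _, h, .coll _, hvs => by
    obtain ⟨_, rfl, ha⟩ := exists_eq_coll_of_mergeR_coll_eq h
    exact memList_mono (fun _ => memA_of_mergeA_eq ha) hvs
  | .pair _ _, _, _, .int _, hw | .pair _ _, _, _, .bool _, hw | .pair _ _, _, _, .coll _, hw
  | .coll _, _, _, .int _, hw | .coll _, _, _, .bool _, hw | .coll _, _, _, .pair _ _, hw => hw.elim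
end

mutual
theorem tcolorsA_subset_of_mergeA_eq : ∀ {t₁ t₂ : ATy}, mergeA t₁ t₂ = t₂ → tcolorsA t₁ ⊆ tcolorsA t₂
  | .ann _ _, .ann _ _, h => by
    obtain ⟨hω, hΦ⟩ := ATy.ann.inj h
    exact Set.union_subset_union (Set.union_eq_right.mp hΦ) (tcolorsR_subset_of_mergeR_eq hω)

theorem tcolorsR_subset_of_mergeR_eq : ∀ {ω₁ ω₂ : RTy}, mergeR ω₁ ω₂ = ω₂ → tcolorsR ω₁ ⊆ tcolorsR ω₂
  | .int, _, _ => Set.empty_subset _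
  | .bool, _, _ => Set.empty_subset _
  | .pair _ _, _, h => by
    obtain ⟨_, _, rfl, ha, hb⟩ := exists_eq_pair_of_mergeR_pair_eq h
    exact Set.union_subset_union (tcolorsA_subset_of_mergeA_eq ha) (tcolorsA_subset_of_mergeA_eq hb)
  | .coll _, _, h => by
    obtain ⟨_, rfl, ha⟩ := exists_eq_coll_of_mergeR_coll_eq h
    exact tcolorsA_subset_of_mergeA_eq ha
end

theorem subtype_sem_subset (t₁ t₂ : ATy) (hsub : mergeA t₁ t₂ = t₂) :
    (∀ v : AVal, memA v t₁ → memA v t₂) ∧ tcolorsA t₁ ⊆ tcolorsA t₂ :=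
  ⟨fun _ => memA_of_mergeA_eq hsub, tcolorsA_subset_of_mergeA_eq hsub⟩
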